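/- Let M = M₁ ⊕₃ M₂ be the 3-sum of binary matroids M₁ and M₂ with Z = E(M₁) ∩ E(M₂) a 3-element circuit of both. If C is a cycle of M, then there are cycles C₁ of M₁ and C₂ of M₂ such that C = C₁ △ C₂ and |C₁ ∩ C₂| ≤ 1. -/

import Mathlib

/-!
Write `C = C₁ ∆ C₂` with `Cᵢ` a cycle of `Mᵢ`; then `C₁ ∩ C₂ ⊆ Z`. If `|C₁ ∩ C₂| ≥ 2`, replace
`Cᵢ` by `Cᵢ ∆ Z`. In a binary matroid the symmetric difference of a cycle and a finite cycle is
again a cycle: the circuits meeting the finite cycle are finitely many, and finite sets are cycles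
exactly when their representing vectors sum to zero. The new pair has the same symmetric
difference and meets in `Z \ (C₁ ∪ C₂)`, which is disjoint from `C₁ ∩ C₂` inside the three-element
set `Z`, hence has at most one element.
-/

open Set

variable {α : Type*}

/-- A circuit of a matroid: an inclusion-minimal dependent set. -/
def MCircuit (M : Matroid α) (C : Set α) : Prop :=
  M.Dep C ∧ ∀ C' ⊂ C, M.Indep C'

/-- A binary matroid: one representable over GF(2). -/
def IsBinary (M : Matroid α) : Prop :=
  ∃ (n : ℕ) (φ : α → (Fin n → ZMod 2)),
    ∀ I ⊆ M.E, (M.Indep I ↔ LinearIndependent (ZMod 2) (fun x : I => φ x))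

/-- A cycle of a matroid: a (possibly empty) disjoint union of circuits. -/
def MCycle (M : Matroid α) (C : Set α) : Prop :=
  ∃ 𝒞 : Set (Set α), (∀ D ∈ 𝒞, MCircuit M D) ∧ 𝒞.Pairwise Disjoint ∧ C = ⋃₀ 𝒞

/-- Deletion of a set of elements from a matroid. -/
def MDelete (M : Matroid α) (D : Set α) : Matroid α := M.restrict (M.E \ D)

/-- The rank of a matroid: the supremum of sizes of independent sets. -/
noncomputable def mRank (M : Matroid α) : ℕ := sSup (Set.ncard '' {I | M.Indep I})

lemma mcircuit_iff_isCircuit {M : Matroid α} {C : Set α} : MCircuit M C ↔ M.IsCircuit C :=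
  Matroid.isCircuit_iff_forall_ssubset.symm

section Cycle

variable {M : Matroid α} {A B X : Set α}

lemma mcycle_iff : MCycle M X ↔
    ∃ 𝒞 : Set (Set α), (∀ D ∈ 𝒞, M.IsCircuit D) ∧ 𝒞.Pairwise Disjoint ∧ X = ⋃₀ 𝒞 := by
  simp only [MCycle, mcircuit_iff_isCircuit]

lemma mcycle_sUnion {𝒞 : Set (Set α)} (h𝒞 : ∀ D ∈ 𝒞, M.IsCircuit D)
    (hpd : 𝒞.Pairwise Disjoint) : MCycle M (⋃₀ 𝒞) :=
  mcycle_iff.mpr ⟨𝒞, h𝒞, hpd, rfl⟩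

lemma Matroid.IsCircuit.mcycle (hX : M.IsCircuit X) : MCycle M X := by
  simpa using mcycle_sUnion (M := M) (𝒞 := {X}) (by simpa) (pairwise_singleton _ _)

lemma mcycle_empty (M : Matroid α) : MCycle M ∅ := by
  simpa using mcycle_sUnion (M := M) (𝒞 := ∅) (by simp) (pairwise_empty _)

lemma MCycle.subset_ground (h : MCycle M X) : X ⊆ M.E := by
  obtain ⟨𝒞, h𝒞, -, rfl⟩ := mcycle_iff.mp h
  exact sUnion_subset fun D hD => (h𝒞 D hD).subset_ground

lemma MCycle.union (hA : MCycle M A) (hB : MCycle M B) (hAB : Disjoint A B) :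
    MCycle M (A ∪ B) := by
  obtain ⟨𝒜, h𝒜, h𝒜d, rfl⟩ := mcycle_iff.mp hA
  obtain ⟨ℬ, hℬ, hℬd, rfl⟩ := mcycle_iff.mp hB
  rw [← sUnion_union]
  refine mcycle_sUnion (fun D hD => hD.elim (h𝒜 D) (hℬ D)) ?_
  refine pairwise_union_of_symm.mpr ⟨h𝒜d, hℬd, ?_⟩
  exact fun D hD D' hD' _ => hAB.mono (subset_sUnion_of_mem hD) (subset_sUnion_of_mem hD')

lemma MCycle.exists_isCircuit_diff (h : MCycle M X) (hX : X.Nonempty) :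
    ∃ D ⊆ X, M.IsCircuit D ∧ MCycle M (X \ D) := by
  obtain ⟨𝒞, h𝒞, hpd, rfl⟩ := mcycle_iff.mp h
  obtain ⟨x, D, hD, -⟩ := hX
  refine ⟨D, subset_sUnion_of_mem hD, h𝒞 D hD, ?_⟩
  have hrest : ⋃₀ 𝒞 \ D = ⋃₀ (𝒞 \ {D}) := by
    ext y
    simp only [mem_sdiff, mem_sUnion, mem_singleton_iff]
    constructor
    · rintro ⟨⟨D', hD', hyD'⟩, hyD⟩
      exact ⟨D', ⟨hD', by rintro rfl; exact hyD hyD'⟩, hyD'⟩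
    · rintro ⟨D', ⟨hD', hne⟩, hyD'⟩
      exact ⟨⟨D', hD', hyD'⟩, fun hyD => disjoint_left.mp (hpd hD' hD hne) hyD' hyD⟩
  rw [hrest]
  exact mcycle_sUnion (fun D' hD' => h𝒞 D' hD'.1) (hpd.mono sdiff_subset)

/-- In a finitary matroid only finitely many circuits of a cycle meet a given finite set. -/
lemma MCycle.exists_split_finite [M.Finitary] (hA : MCycle M A) (hB : B.Finite) :
    ∃ U₀ U₁, MCycle M U₀ ∧ MCycle M U₁ ∧ U₁.Finite ∧ Disjoint U₀ (U₁ ∪ B) ∧ A = U₀ ∪ U₁ := by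
  obtain ⟨𝒞, h𝒞, hpd, rfl⟩ := mcycle_iff.mp hA
  set 𝒞₀ := 𝒞 ∩ {D | Disjoint D B}
  set 𝒞₁ := 𝒞 \ {D | Disjoint D B}
  have h𝒞₁ : 𝒞₁.Finite := by
    refine (hB.finite_subsets.subset ?_).of_finite_image (f := (· ∩ B)) ?_
    · rintro _ ⟨D, -, rfl⟩
      exact inter_subset_right
    · rintro D ⟨hD, hDB⟩ D' ⟨hD', -⟩ (hEq : D ∩ B = D' ∩ B)
      obtain ⟨x, hxD, hxB⟩ := not_disjoint_iff.mp hDB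
      have hxD' : x ∈ D' ∩ B := hEq ▸ ⟨hxD, hxB⟩
      exact hpd.eq hD hD' (not_disjoint_iff.mpr ⟨x, hxD, hxD'.1⟩)
  refine ⟨⋃₀ 𝒞₀, ⋃₀ 𝒞₁, mcycle_sUnion (fun D hD => h𝒞 D hD.1) (hpd.mono inter_subset_left),
    mcycle_sUnion (fun D hD => h𝒞 D hD.1) (hpd.mono sdiff_subset),
    h𝒞₁.sUnion fun D hD => (h𝒞 D hD.1).finite, ?_, by rw [← sUnion_union, inter_union_sdiff]⟩
  refine disjoint_sUnion_left.mpr fun D ⟨hD, hDB⟩ => disjoint_union_right.mpr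
    ⟨disjoint_sUnion_right.mpr fun D' ⟨hD', hD'B⟩ => hpd hD hD' ?_, hDB⟩
  rintro rfl
  exact hD'B hDB

end Cycle

section Binary

variable {V : Type*} [AddCommGroup V] [Module (ZMod 2) V]

lemma Finset.sum_symmDiff_zmod_two [DecidableEq α] (f : α → V) (S T : Finset α) :
    ∑ e ∈ symmDiff S T, f e = ∑ e ∈ S, f e + ∑ e ∈ T, f e := by
  rw [symmDiff_def, sup_eq_union, Finset.sum_union disjoint_sdiff_sdiff,
    ← Finset.sum_inter_add_sum_sdiff S T f, ← Finset.sum_inter_add_sum_sdiff T S f,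
    Finset.inter_comm T S, add_add_add_comm, ZModModule.add_self, zero_add]

def IsBinaryRep (M : Matroid α) (φ : α → V) : Prop :=
  ∀ I ⊆ M.E, (M.Indep I ↔ LinearIndependent (ZMod 2) (fun x : I => φ x))

namespace IsBinaryRep

variable {M : Matroid α} {φ : α → V} {A B : Set α}

lemma exists_finset_of_isCircuit (hφ : IsBinaryRep M φ) {C : Set α} (hC : M.IsCircuit C) :
    ∃ S : Finset α, ↑S = C ∧ ∑ e ∈ S, φ e = 0 := by
  obtain ⟨f, hfC, hf0, hfne⟩ := linearDepOn_iff.mp fun h =>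
    hC.not_indep ((hφ C hC.subset_ground).mpr h)
  have hsum : ∑ e ∈ f.support, φ e = 0 := by
    rw [← hf0]
    refine Finset.sum_congr rfl fun e he => ?_
    have h1 : ∀ a : ZMod 2, a ≠ 0 → a = 1 := by decide
    rw [h1 _ (Finsupp.mem_support_iff.mp he), one_smul]
  refine ⟨f.support, by_contra fun hne => ?_, hsum⟩
  have hind := hC.ssubset_indep ((show ↑f.support ⊆ C from hfC).ssubset_of_ne hne)
  exact linearDepOn_iff.mpr ⟨f, (Finsupp.mem_supported _ _).mpr subset_rfl, hf0, hfne⟩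
    ((hφ _ hind.subset_ground).mp hind)

lemma finitary (hφ : IsBinaryRep M φ) : M.Finitary :=
  Matroid.finitary_iff_forall_isCircuit_finite.mpr fun _ hC => by
    obtain ⟨S, rfl, -⟩ := hφ.exists_finset_of_isCircuit hC
    exact S.finite_toSet

lemma dep_of_sum_eq_zero (hφ : IsBinaryRep M φ) {F : Finset α} (hF : ↑F ⊆ M.E)
    (hne : F.Nonempty) (hsum : ∑ e ∈ F, φ e = 0) : M.Dep ↑F := by
  refine ⟨fun hind => ?_, hF⟩
  obtain ⟨e, he⟩ := hne
  exact one_ne_zero <| Fintype.linearIndependent_iff.mp ((hφ _ hF).mp hind) (fun _ => 1)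
    (by simpa [Finset.sum_attach F φ] using hsum) ⟨e, he⟩

lemma sum_eq_zero_of_mcycle (hφ : IsBinaryRep M φ) (F : Finset α) (hF : MCycle M ↑F) :
    ∑ e ∈ F, φ e = 0 := by
  classical
  induction F using Finset.strongInduction with
  | _ F ih =>
  rcases F.eq_empty_or_nonempty with rfl | hne
  · exact Finset.sum_empty
  obtain ⟨D, hDF, hD, hrest⟩ := hF.exists_isCircuit_diff (by exact_mod_cast hne)
  obtain ⟨G, rfl, hG⟩ := hφ.exists_finset_of_isCircuit hD
  have hGF : G ⊆ F := by exact_mod_cast hDF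
  have hGne : G.Nonempty := by exact_mod_cast hD.nonempty
  rw [← Finset.sum_sdiff hGF, hG, add_zero]
  exact ih _ (Finset.sdiff_ssubset hGF hGne) (by rwa [Finset.coe_sdiff])

lemma mcycle_of_sum_eq_zero (hφ : IsBinaryRep M φ) (F : Finset α) (hF : ↑F ⊆ M.E)
    (hsum : ∑ e ∈ F, φ e = 0) : MCycle M ↑F := by
  classical
  induction F using Finset.strongInduction with
  | _ F ih =>
  rcases F.eq_empty_or_nonempty with rfl | hne
  · simpa using mcycle_empty M
  obtain ⟨D, hDF, hD⟩ := (hφ.dep_of_sum_eq_zero hF hne hsum).exists_isCircuit_subset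
  obtain ⟨G, rfl, hG⟩ := hφ.exists_finset_of_isCircuit hD
  have hGF : G ⊆ F := by exact_mod_cast hDF
  have hrest : MCycle M ↑(F \ G) := by
    refine ih _ (Finset.sdiff_ssubset hGF (by exact_mod_cast hD.nonempty))
      ((Finset.coe_subset.mpr Finset.sdiff_subset).trans hF) ?_
    rwa [← Finset.sum_sdiff hGF, hG, add_zero] at hsum
  rw [← Finset.sdiff_union_of_subset hGF, Finset.coe_union]
  exact hrest.union hD.mcycle (Finset.disjoint_coe.mpr Finset.sdiff_disjoint)

lemma mcycle_symmDiff (hφ : IsBinaryRep M φ) (hA : MCycle M A) (hB : MCycle M B)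
    (hBfin : B.Finite) : MCycle M (symmDiff A B) := by
  have := hφ.finitary
  obtain ⟨U₀, U₁, h₀, h₁, hU₁fin, hdisj, rfl⟩ := hA.exists_split_finite hBfin
  have hU₁B : MCycle M (symmDiff U₁ B) := by
    lift U₁ to Finset α using hU₁fin
    lift B to Finset α using hBfin
    classical
    rw [← Finset.coe_symmDiff]
    refine hφ.mcycle_of_sum_eq_zero _ ?_ ?_
    · rw [Finset.coe_symmDiff]
      exact symmDiff_le_sup.trans (union_subset h₁.subset_ground hB.subset_ground)
    · rw [Finset.sum_symmDiff_zmod_two, hφ.sum_eq_zero_of_mcycle _ h₁,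
        hφ.sum_eq_zero_of_mcycle _ hB, add_zero]
  have h₀₁ : Disjoint U₀ U₁ := hdisj.mono_right subset_union_left
  have h₀₁B : Disjoint U₀ (symmDiff U₁ B) := hdisj.mono_right symmDiff_le_sup
  have hsplit : symmDiff (U₀ ∪ U₁) B = U₀ ∪ symmDiff U₁ B := by
    rw [show U₀ ∪ U₁ = symmDiff U₀ U₁ from h₀₁.symmDiff_eq_sup.symm, symmDiff_assoc]
    exact h₀₁B.symmDiff_eq_sup
  exact hsplit ▸ h₀.union hU₁B h₀₁B

end IsBinaryRep

end Binary

section Intersection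

variable {A B Z : Set α}

lemma symmDiff_inter_symmDiff_of_inter_subset (h : A ∩ B ⊆ Z) :
    symmDiff A Z ∩ symmDiff B Z = Z \ (A ∪ B) := by
  ext x
  have := @h x
  simp only [mem_inter_iff, mem_symmDiff, mem_sdiff, mem_union] at this ⊢
  tauto

lemma ncard_inter_add_ncard_sdiff_union_le (hZ : Z.Finite) (h : A ∩ B ⊆ Z) :
    (A ∩ B).ncard + (Z \ (A ∪ B)).ncard ≤ Z.ncard := by
  rw [← ncard_union_eq (disjoint_sdiff_right.mono_left (inter_subset_left.trans subset_union_left))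
    (hZ.subset h) (hZ.subset sdiff_subset)]
  exact ncard_le_ncard (union_subset h sdiff_subset) hZ

end Intersection

theorem threeSum_cycle_decomp_general (M M₁ M₂ : Matroid α)
    (hM₁ : IsBinary M₁) (hM₂ : IsBinary M₂)
    (hZcard : (M₁.E ∩ M₂.E).ncard = 3)
    (hZ1 : MCircuit M₁ (M₁.E ∩ M₂.E)) (hZ2 : MCircuit M₂ (M₁.E ∩ M₂.E))
    (hsum : ∀ C, MCycle M C ↔
      ∃ C₁ C₂, MCycle M₁ C₁ ∧ MCycle M₂ C₂ ∧ C = symmDiff C₁ C₂)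
    (C : Set α) (hC : MCycle M C) :
    ∃ C₁ C₂, MCycle M₁ C₁ ∧ MCycle M₂ C₂ ∧ C = symmDiff C₁ C₂ ∧
      (C₁ ∩ C₂).Subsingleton := by
  obtain ⟨C₁, C₂, h₁, h₂, rfl⟩ := (hsum C).mp hC
  set Z := M₁.E ∩ M₂.E
  have hZfin : Z.Finite := finite_of_ncard_pos (by omega)
  have hinter : C₁ ∩ C₂ ⊆ Z := inter_subset_inter h₁.subset_ground h₂.subset_ground
  have hcount := ncard_inter_add_ncard_sdiff_union_le hZfin hinter
  by_cases hsmall : (C₁ ∩ C₂).ncard ≤ 1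
  · have := (hZfin.subset hinter).to_subtype
    exact ⟨C₁, C₂, h₁, h₂, rfl, ncard_le_one_iff_subsingleton.mp hsmall⟩
  obtain ⟨n₁, φ₁, hφ₁⟩ := hM₁
  obtain ⟨n₂, φ₂, hφ₂⟩ := hM₂
  refine ⟨symmDiff C₁ Z, symmDiff C₂ Z,
    IsBinaryRep.mcycle_symmDiff hφ₁ h₁ (mcircuit_iff_isCircuit.mp hZ1).mcycle hZfin,
    IsBinaryRep.mcycle_symmDiff hφ₂ h₂ (mcircuit_iff_isCircuit.mp hZ2).mcycle hZfin,
    by rw [symmDiff_symmDiff_symmDiff_comm, symmDiff_self, symmDiff_bot], ?_⟩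
  rw [symmDiff_inter_symmDiff_of_inter_subset hinter]
  have := (hZfin.subset (sdiff_subset (t := C₁ ∪ C₂))).to_subtype
  exact ncard_le_one_iff_subsingleton.mp (by omega)

theorem threeSum_cycle_decomp (M M₁ M₂ : Matroid α)
    (hM₁ : IsBinary M₁) (hM₂ : IsBinary M₂)
    (hZcard : (M₁.E ∩ M₂.E).ncard = 3)
    (hZ1 : MCircuit M₁ (M₁.E ∩ M₂.E)) (hZ2 : MCircuit M₂ (M₁.E ∩ M₂.E))
    (hE : M.E = symmDiff M₁.E M₂.E)
    (hsum : ∀ C, MCycle M C ↔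
      ∃ C₁ C₂, MCycle M₁ C₁ ∧ MCycle M₂ C₂ ∧ C = symmDiff C₁ C₂)
    (C : Set α) (hC : MCycle M C) :
    ∃ C₁ C₂, MCycle M₁ C₁ ∧ MCycle M₂ C₂ ∧ C = symmDiff C₁ C₂ ∧
      (C₁ ∩ C₂).Subsingleton :=
  threeSum_cycle_decomp_general M M₁ M₂ hM₁ hM₂ hZcard hZ1 hZ2 hsum C hC
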